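/- Minimax interchange for bilinear objectives over compact convex sets: if K ⊆ ℝ^n and L ⊆ ℝ^m are nonempty compact convex sets and f(x,y) = ⟨x, A y⟩ + ⟨b, x⟩ + ⟨c, y⟩ is a bilinear-affine function, then min_{x ∈ K} max_{y ∈ L} f(x,y) = max_{y ∈ L} min_{x ∈ K} f(x,y). -/
import Mathlib


open scoped Matrix

/-- Minimax interchange for a bilinear-affine objective over nonempty compact
convex sets `K ⊆ ℝ^n`, `L ⊆ ℝ^m`. -/
theorem stmt_6 (n m : ℕ) (A : Matrix (Fin n) (Fin m) ℝ)
    (b : Fin n → ℝ) (c : Fin m → ℝ)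
    (K : Set (Fin n → ℝ)) (L : Set (Fin m → ℝ))
    (hKne : K.Nonempty) (hKc : IsCompact K) (hKconv : Convex ℝ K)
    (hLne : L.Nonempty) (hLc : IsCompact L) (hLconv : Convex ℝ L)
    (f : (Fin n → ℝ) → (Fin m → ℝ) → ℝ)
    (hf : ∀ x y, f x y = x ⬝ᵥ (A.mulVec y) + b ⬝ᵥ x + c ⬝ᵥ y) :
    (⨅ x : K, ⨆ y : L, f x y) = ⨆ y : L, ⨅ x : K, f x y := by
  classical
  haveI : Nonempty K := hKne.to_subtype
  haveI : Nonempty L := hLne.to_subtype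
  -- joint continuity
  have hfc : Continuous (fun p : (Fin n → ℝ) × (Fin m → ℝ) => f p.1 p.2) := by
    simp only [hf, dotProduct, Matrix.mulVec]
    fun_prop
  have hcx : ∀ y, Continuous fun x => f x y :=
    fun y => hfc.comp (continuous_id.prodMk continuous_const)
  -- uniform bound
  obtain ⟨M, hM⟩ := (hKc.prod hLc).exists_bound_of_continuousOn hfc.continuousOn
  have hMb : ∀ x ∈ K, ∀ y ∈ L, |f x y| ≤ M := fun x hx y hy => hM (x, y) ⟨hx, hy⟩
  have hbddA : ∀ x : K, BddAbove (Set.range fun y : L => f x y) := by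
    rintro x
    exact ⟨M, by rintro _ ⟨y, rfl⟩; exact (abs_le.mp (hMb x x.2 y y.2)).2⟩
  have hbddB : ∀ y : L, BddBelow (Set.range fun x : K => f x y) := by
    rintro y
    exact ⟨-M, by rintro _ ⟨x, rfl⟩; exact (abs_le.mp (hMb x x.2 y y.2)).1⟩
  have hbddSupInner : BddBelow (Set.range fun x : K => ⨆ y : L, f x y) := by
    refine ⟨-M, ?_⟩
    rintro _ ⟨x, rfl⟩
    obtain ⟨y₀⟩ := (inferInstance : Nonempty L)
    exact le_trans (abs_le.mp (hMb x x.2 y₀ y₀.2)).1 (le_ciSup (hbddA x) y₀)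
  have hbddInfInner : BddAbove (Set.range fun y : L => ⨅ x : K, f x y) := by
    refine ⟨M, ?_⟩
    rintro _ ⟨y, rfl⟩
    obtain ⟨x₀⟩ := (inferInstance : Nonempty K)
    exact le_trans (ciInf_le (hbddB y) x₀) (abs_le.mp (hMb x₀ x₀.2 y y.2)).2
  -- easy inequality
  have easy : (⨆ y : L, ⨅ x : K, f x y) ≤ ⨅ x : K, ⨆ y : L, f x y := by
    refine le_ciInf fun x => ciSup_le fun y => ?_
    exact le_trans (ciInf_le (hbddB y) x) (le_ciSup (hbddA x) y)
  refine le_antisymm ?_ easy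
  by_contra hlt
  push_neg at hlt
  obtain ⟨α, hα₁, hα₂⟩ := exists_between hlt
  -- the closed convex sets C y
  set C : L → Set (Fin n → ℝ) := fun y => {x | f x (y : Fin m → ℝ) ≤ α} with hC
  have hCclosed : ∀ y : L, IsClosed (C y) :=
    fun y => isClosed_le (hcx y) continuous_const
  have hinter : (K ∩ ⋂ y : L, C y) = ∅ := by
    ext x
    simp only [Set.mem_inter_iff, Set.mem_iInter, Set.mem_empty_iff_false, iff_false, not_and]
    intro hxK hx
    have h1 : (⨆ y : L, f x y) ≤ α := ciSup_le fun y => hx y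
    have h2 : (⨅ x : K, ⨆ y : L, f x y) ≤ α :=
      le_trans (ciInf_le hbddSupInner ⟨x, hxK⟩) h1
    exact absurd h2 (not_le.mpr hα₂)
  obtain ⟨t, ht⟩ := hKc.elim_finite_subfamily_closed C hCclosed hinter
  have hKout : ∀ x ∈ K, ∃ i ∈ t, α < f x (i : Fin m → ℝ) := by
    intro x hx
    by_contra h
    push_neg at h
    have hxmem : x ∈ K ∩ ⋂ i ∈ t, C i :=
      ⟨hx, Set.mem_iInter₂.mpr fun i hi => h i hi⟩
    rw [ht] at hxmem
    exact hxmem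
  -- affinity in x
  have haffx : ∀ (a a' : ℝ), a + a' = 1 → ∀ x x' y,
      f (a • x + a' • x') y = a * f x y + a' * f x' y := by
    intro a a' h x x' y
    have h1 : a' = 1 - a := by linarith
    subst h1
    simp only [hf, add_dotProduct, smul_dotProduct, dotProduct_add,
      dotProduct_smul, smul_eq_mul]
    ring
  -- affinity in y over convex combinations
  have haffy : ∀ x (ι : Type) [Fintype ι] (μ : ι → ℝ) (yv : ι → (Fin m → ℝ)),
      (∑ i, μ i) = 1 →
      f x (∑ i, μ i • yv i) = ∑ i, μ i * f x (yv i) := by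
    intro x ι _ μ yv hμ
    set G : (Fin m → ℝ) →ₗ[ℝ] ℝ :=
      { toFun := fun y => x ⬝ᵥ A.mulVec y + c ⬝ᵥ y
        map_add' := fun y z => by
          simp only [Matrix.mulVec_add, dotProduct_add]; ring
        map_smul' := fun r y => by
          simp only [Matrix.mulVec_smul, dotProduct_smul, smul_eq_mul,
            RingHom.id_apply]; ring } with hG
    have hfG : ∀ y, f x y = G y + b ⬝ᵥ x := by
      intro y; simp only [hf, hG, LinearMap.coe_mk, AddHom.coe_mk]; ring
    simp only [hfG, map_sum, map_smul, smul_eq_mul, mul_add]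
    rw [Finset.sum_add_distrib, ← Finset.sum_mul, hμ, one_mul]
  -- setup for separation
  set yv : ↥t → (Fin m → ℝ) := fun i => ((i : ↥L) : Fin m → ℝ) with hyv
  set Φ : (Fin n → ℝ) → (↥t → ℝ) := fun x i => f x (yv i) with hΦ
  have hΦcont : Continuous Φ := continuous_pi fun i => hcx _
  set S : Set (↥t → ℝ) := Φ '' K with hS
  set Q : Set (↥t → ℝ) := {z | ∀ i, z i ≤ α} with hQ
  have hScomp : IsCompact S := hKc.image hΦcont
  have hSconv : Convex ℝ S := by
    rintro _ ⟨x, hx, rfl⟩ _ ⟨x', hx', rfl⟩ a a' ha ha' hsum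
    refine ⟨a • x + a' • x', hKconv hx hx' ha ha' hsum, ?_⟩
    funext i
    simp only [hΦ, Pi.add_apply, Pi.smul_apply, smul_eq_mul]
    exact haffx a a' hsum x x' _
  have hQclosed : IsClosed Q := by
    rw [hQ, Set.setOf_forall]
    exact isClosed_iInter fun i => isClosed_le (continuous_apply i) continuous_const
  have hQconv : Convex ℝ Q := by
    rw [hQ, Set.setOf_forall]
    exact convex_iInter fun i =>
      convex_halfSpace_le ⟨fun u v => rfl, fun r u => rfl⟩ α
  have hdisj : Disjoint S Q := by
    rw [Set.disjoint_left]
    rintro _ ⟨x, hx, rfl⟩ hzQ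
    obtain ⟨i, hi, hlt'⟩ := hKout x hx
    exact absurd (hzQ ⟨i, hi⟩) (not_le.mpr hlt')
  obtain ⟨φ, u, v, hφS, huv, hφQ⟩ :=
    geometric_hahn_banach_compact_closed hSconv hScomp hQconv hQclosed hdisj
  -- representation of φ
  set w : ↥t → ℝ := fun i => φ (Pi.single i 1) with hw
  have hrep : ∀ z : ↥t → ℝ, φ z = ∑ i, z i * w i := by
    intro z
    conv_lhs => rw [← Finset.univ_sum_single z]
    rw [map_sum]
    refine Finset.sum_congr rfl fun i _ => ?_
    have : Pi.single i (z i) = z i • (Pi.single i 1 : ↥t → ℝ) := by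
      rw [← Pi.single_smul, smul_eq_mul, mul_one]
    rw [this, map_smul, smul_eq_mul]
  -- the constant α vector is in Q
  have hαQ : (fun _ => α : ↥t → ℝ) ∈ Q := fun i => le_refl α
  -- all w i are nonpositive
  have hwle : ∀ i, w i ≤ 0 := by
    intro i
    by_contra h
    push_neg at h
    set s : ℝ := max 0 ((φ (fun _ => α) - v) / w i) with hs
    have hs0 : 0 ≤ s := le_max_left _ _
    have hzQ : ((fun _ => α) - s • (Pi.single i 1 : ↥t → ℝ)) ∈ Q := by
      intro j
      simp only [Pi.sub_apply, Pi.smul_apply, smul_eq_mul]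
      have : 0 ≤ s * (Pi.single i 1 : ↥t → ℝ) j := by
        rcases eq_or_ne j i with rfl | hne
        · simp [hs0]
        · simp [Pi.single_apply, hne]
      linarith
    have hv := hφQ _ hzQ
    rw [map_sub, map_smul, smul_eq_mul] at hv
    have hge : (φ (fun _ => α) - v) / w i ≤ s := le_max_right _ _
    have : φ (fun _ => α) - v ≤ s * w i := by
      rw [div_le_iff₀ h] at hge
      linarith
    have : φ (fun _ => α) - s * w i ≤ v := by linarith
    change v < φ (fun _ => α) - s * (w i) at hv
    linarith
  -- key inequality on K
  have hkey : ∀ x ∈ K, (∑ i, f x (yv i) * w i) < ∑ i, α * w i := by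
    intro x hx
    have h1 : φ (Φ x) < u := hφS _ ⟨x, hx, rfl⟩
    have h2 : v < φ (fun _ => α) := hφQ _ hαQ
    have h3 : φ (Φ x) < φ (fun _ => α) := by linarith
    rw [hrep, hrep] at h3
    exact h3
  -- weights
  set lam : ↥t → ℝ := fun i => -w i with hlam
  have hlamnn : ∀ i, 0 ≤ lam i := fun i => neg_nonneg.mpr (hwle i)
  set T : ℝ := ∑ i, lam i with hT
  have hkey' : ∀ x ∈ K, α * T < ∑ i, lam i * f x (yv i) := by
    intro x hx
    have h := hkey x hx
    have e1 : ∑ i, lam i * f x (yv i)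
        = -∑ i, f x (yv i) * w i := by
      rw [← Finset.sum_neg_distrib]
      exact Finset.sum_congr rfl fun i _ => by simp [hlam]; ring
    have e2 : α * T = -∑ i, α * w i := by
      rw [hT, Finset.mul_sum, ← Finset.sum_neg_distrib]
      exact Finset.sum_congr rfl fun i _ => by simp [hlam]
    rw [e1, e2]
    linarith
  have hTnn : 0 ≤ T := Finset.sum_nonneg fun i _ => hlamnn i
  have hTpos : 0 < T := by
    rcases hTnn.lt_or_eq with h | h
    · exact h
    · exfalso
      obtain ⟨x₀, hx₀⟩ := hKne
      have hz : ∀ i ∈ Finset.univ, lam i = 0 :=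
        (Finset.sum_eq_zero_iff_of_nonneg fun i _ => hlamnn i).mp h.symm
      have := hkey' x₀ hx₀
      rw [← h] at this
      have hzero : (∑ i, lam i * f x₀ (yv i)) = 0 :=
        Finset.sum_eq_zero fun i hi => by rw [hz i hi, zero_mul]
      rw [hzero, mul_zero] at this
      exact lt_irrefl 0 this
  set μ : ↥t → ℝ := fun i => lam i / T with hμ
  have hμsum : (∑ i, μ i) = 1 := by
    rw [hμ]
    rw [← Finset.sum_div, ← hT, div_self (ne_of_gt hTpos)]
  set ybar : Fin m → ℝ := ∑ i, μ i • yv i with hybar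
  have hybarL : ybar ∈ L := by
    refine hLconv.sum_mem (fun i _ => div_nonneg (hlamnn i) (le_of_lt hTpos)) hμsum ?_
    exact fun i _ => (i : ↥L).2
  have hfinal : ∀ x : K, α < f (x : Fin n → ℝ) ybar := by
    intro x
    rw [hybar, haffy (x : Fin n → ℝ) ↥t μ _ hμsum]
    have e3 : (∑ i, μ i * f (x : Fin n → ℝ) (yv i))
        = (∑ i, lam i * f (x : Fin n → ℝ) (yv i)) / T := by
      rw [Finset.sum_div]
      exact Finset.sum_congr rfl fun i _ => by rw [hμ]; ring
    rw [e3, lt_div_iff₀ hTpos]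
    have := hkey' x x.2
    linarith
  have h4 : α ≤ ⨅ x : K, f (x : Fin n → ℝ) ybar :=
    le_ciInf fun x => le_of_lt (hfinal x)
  have h5 : α ≤ ⨆ y : L, ⨅ x : K, f x y :=
    le_trans h4 (le_ciSup hbddInfInner ⟨ybar, hybarL⟩)
  linarith
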